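/- Suppose θ̄·A'(1) < 1 − γ. Then every triple (λ_low*, λ_high*, θ̂*) maximizing Π^bin(λ_low, λ_high, θ̂) over the set {(λ_low, λ_high, θ̂) : 0 < λ_low ≤ λ_high ≤ 1, θ̂ ∈ [0,θ̄]} satisfies λ_low* < λ_high* (the two optimal certificates are distinct). -/

import Mathlib

/-!
With views chosen optimally, a type with virtual value `x` certified at `λ` yields
`G (R x λ)`, where `G y = sup_{v ≥ 0} (y v - c v)` is the Legendre transform of the cost:
convex, nondecreasing, and strictly increasing on `[0, ∞)`.

Suppose an optimum pools all types at one certificate `m`. Since `R x l - R x m` is monotone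
in `x`, a type `φ t` that would strictly gain from another certificate `l` lets the designer
move every type on one side of the cutoff `t` to `l` and strictly raise profit. So `m`
maximizes `l ↦ R x l` on `(0, 1]`, both for `x = θ̄` and for some `x = φ t < θ̄` with
`R (φ t) m > 0`. The slope condition makes `∂R/∂λ (θ̄, 1) < 0`, so `m < 1` and both
`λ`-derivatives vanish at `m`; their difference is `(θ̄ - φ t) A'(m)`, so `A'(m) = 0`, whence
`A m = γ` and `R θ̄ m = γ θ̄ - γ < θ̄ - γ = R θ̄ 1`, contradicting maximality.
-/

open Set

/-- Effective virtual value `R(x, λ) = (x + (1−λ)/λ)·A(λ) − γ/λ`. -/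
noncomputable def R (A : ℝ → ℝ) (γ x l : ℝ) : ℝ := (x + (1 - l) / l) * A l - γ / l

/-- Pointwise-optimal views `V^{s,λ}(θ) = (c')⁻¹(max{R(φ(θ),λ), 0})`. -/
noncomputable def Vs (A cinv : ℝ → ℝ) (γ x l : ℝ) : ℝ := cinv (max (R A γ x l) 0)

/-- Pointwise profit contribution `π(θ, λ) = R(φθ,λ)·V^{s,λ}(θ) − c(V^{s,λ}(θ))`. -/
noncomputable def pointProfit (A c cinv : ℝ → ℝ) (γ x l : ℝ) : ℝ :=
  R A γ x l * Vs A cinv γ x l - c (Vs A cinv γ x l)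

/-- Two-certificate profit `Π^bin(λ_low, λ_high, θ̂)`. -/
noncomputable def Pibin (A c cinv φ f : ℝ → ℝ) (γ θb llo lhi θhat : ℝ) : ℝ :=
  (∫ θ in (0:ℝ)..θhat, pointProfit A c cinv γ (φ θ) llo * f θ) +
    ∫ θ in θhat..θb, pointProfit A c cinv γ (φ θ) lhi * f θ

open MeasureTheory intervalIntegral

noncomputable def legendre (c cinv : ℝ → ℝ) (y : ℝ) : ℝ :=
  y * cinv (max y 0) - c (cinv (max y 0))

lemma StrictConvexOn.add_deriv_mul_sub_lt {S : Set ℝ} {f : ℝ → ℝ} {f' x y : ℝ}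
    (hf : StrictConvexOn ℝ S f) (hx : x ∈ S) (hy : y ∈ S) (hxy : x ≠ y)
    (hf' : HasDerivWithinAt f f' S x) : f x + f' * (y - x) < f y := by
  rcases hxy.lt_or_gt with h | h
  · have := hf.lt_slope_of_hasDerivWithinAt hx hy h hf'
    rw [slope_def_field, lt_div_iff₀ (sub_pos.2 h)] at this
    linarith
  · have := hf.slope_lt_of_hasDerivWithinAt hy hx h hf'
    rw [slope_def_field, div_lt_iff₀ (sub_pos.2 h)] at this
    linarith

section Legendre

variable {c c' cinv : ℝ → ℝ} (hcconv : StrictConvexOn ℝ (Ici 0) c)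
  (hcderiv : ∀ v ∈ Ici (0:ℝ), HasDerivWithinAt c (c' v) (Ici 0) v)
  (hcinv₂ : ∀ y, 0 ≤ y → 0 ≤ cinv y ∧ c' (cinv y) = y)
include hcconv hcderiv hcinv₂

lemma legendre_lt_legendre {a b : ℝ} (hab : max a 0 < b) :
    legendre c cinv a < legendre c cinv b := by
  have hb : 0 < b := (le_max_right a 0).trans_lt hab
  obtain ⟨hv, hc'v⟩ := hcinv₂ (max a 0) (le_max_right a 0)
  obtain ⟨hw, hc'w⟩ := hcinv₂ b hb.le
  have hvw : cinv b ≠ cinv (max a 0) := fun h => by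
    rw [h, hc'v] at hc'w
    exact hab.ne hc'w
  have htangent := hcconv.add_deriv_mul_sub_lt hw hv hvw (hcderiv _ hw)
  rw [hc'w] at htangent
  rw [legendre, legendre, max_eq_left hb.le]
  nlinarith [le_max_left a 0]

variable (hc'0 : c' 0 = 0) (hcinv₁ : ∀ v, 0 ≤ v → cinv (c' v) = v)
include hc'0 hcinv₁

lemma mul_sub_le_legendre (y : ℝ) {w : ℝ} (hw : 0 ≤ w) : y * w - c w ≤ legendre c cinv y := by
  obtain ⟨hv, hc'v⟩ := hcinv₂ (max y 0) (le_max_right y 0)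
  have htangent : c (cinv (max y 0)) + max y 0 * (w - cinv (max y 0)) ≤ c w := by
    rcases eq_or_ne (cinv (max y 0)) w with h | h
    · simp [h]
    · simpa [hc'v] using (hcconv.add_deriv_mul_sub_lt hv hw h (hcderiv _ hv)).le
  rcases le_or_gt y 0 with hy | hy
  · have hcinv0 : cinv (max y 0) = 0 := by
      simpa [max_eq_right hy, hc'0] using hcinv₁ 0 le_rfl
    rw [legendre, hcinv0]
    rw [hcinv0, max_eq_right hy] at htangent
    nlinarith
  · rw [legendre]
    rw [max_eq_left hy.le] at htangent ⊢
    linarith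

lemma legendre_monotone : Monotone (legendre c cinv) := fun a b hab => by
  have hv := (hcinv₂ (max a 0) (le_max_right a 0)).1
  have := mul_sub_le_legendre hcconv hcderiv hcinv₂ hc'0 hcinv₁ b hv
  rw [legendre]
  nlinarith

lemma legendre_convexOn : ConvexOn ℝ univ (legendre c cinv) := by
  refine ⟨convex_univ, fun x _ y _ a b ha hb hab => ?_⟩
  set z := a • x + b • y
  have hv := (hcinv₂ (max z 0) (le_max_right z 0)).1
  have hx := mul_sub_le_legendre hcconv hcderiv hcinv₂ hc'0 hcinv₁ x hv
  have hy := mul_sub_le_legendre hcconv hcderiv hcinv₂ hc'0 hcinv₁ y hv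
  calc legendre c cinv z
      = a * (x * cinv (max z 0) - c (cinv (max z 0)))
        + b * (y * cinv (max z 0) - c (cinv (max z 0))) := by
        rw [legendre]
        simp only [z, smul_eq_mul]
        linear_combination c (cinv (max (a * x + b * y) 0)) * hab
    _ ≤ a • legendre c cinv x + b • legendre c cinv y := by
        simp only [smul_eq_mul]
        gcongr

lemma legendre_continuous : Continuous (legendre c cinv) :=
  continuousOn_univ.1 <|
    (legendre_convexOn hcconv hcderiv hcinv₂ hc'0 hcinv₁).continuousOn isOpen_univ

end Legendre

noncomputable def R' (A A' : ℝ → ℝ) (γ x l : ℝ) : ℝ :=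
  (x + (1 - l) / l) * A' l - (A l - γ) / l ^ 2

section EffectiveVirtualValue

variable {A A' : ℝ → ℝ} {γ x x' l m : ℝ}

lemma R_one (hA1 : A 1 = 1) : R A γ x 1 = x - γ := by
  simp [R, hA1]

lemma continuous_R_left (A : ℝ → ℝ) (γ l : ℝ) : Continuous fun x => R A γ x l := by
  unfold R
  fun_prop

lemma R_sub_R_le (hA : A l ≤ A m) (hx : x ≤ x') :
    R A γ x' l - R A γ x' m ≤ R A γ x l - R A γ x m := by
  have : (R A γ x l - R A γ x m) - (R A γ x' l - R A γ x' m) = (x' - x) * (A m - A l) := by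
    unfold R
    ring
  nlinarith [mul_nonneg (sub_nonneg.2 hx) (sub_nonneg.2 hA)]

lemma R_hasDerivWithinAt {s : Set ℝ} (hl : l ≠ 0) (hA : HasDerivWithinAt A (A' l) s l)
    (γ x : ℝ) : HasDerivWithinAt (R A γ x) (R' A A' γ x l) s l := by
  have hid := hasDerivWithinAt_id l s
  refine ((((hid.const_sub 1).div hid hl).const_add x).mul hA |>.sub
    ((hasDerivWithinAt_const l s γ).div hid hl)).congr_deriv ?_
  simp only [R', id, Pi.div_apply]
  field_simp
  ring

lemma not_isMaxOn_R_one (hA1 : A 1 = 1) (hA' : HasDerivWithinAt A (A' 1) (Icc 0 1) 1)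
    (hslope : x * A' 1 < 1 - γ) : ¬ IsMaxOn (R A γ x) (Ioc 0 1) 1 := by
  intro hmax
  have hd := (R_hasDerivWithinAt one_ne_zero hA' γ x).mono Ioc_subset_Icc_self
  have hcone : (-1 / 2 : ℝ) ∈ posTangentConeAt (Ioc 0 1) 1 := by
    refine mem_posTangentConeAt_of_segment_subset ?_
    rw [segment_symm, segment_eq_Icc (by norm_num)]
    exact Icc_subset_Ioc (by norm_num) (by norm_num)
  have := hmax.localize.hasFDerivWithinAt_nonpos hd.hasFDerivWithinAt hcone
  simp [R', hA1] at this
  linarith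

lemma R'_eq_zero_of_isMaxOn (hm : m ∈ Ioo 0 1) (hA' : HasDerivWithinAt A (A' m) (Icc 0 1) m)
    (hmax : IsMaxOn (R A γ x) (Ioc 0 1) m) : R' A A' γ x m = 0 :=
  (hmax.isLocalMax (Ioc_mem_nhds hm.1 hm.2)).hasDerivAt_eq_zero
    ((R_hasDerivWithinAt hm.1.ne' hA' γ x).hasDerivAt (Icc_mem_nhds hm.1 hm.2))

lemma not_isMaxOn_R_of_isMaxOn (hγ1 : γ < 1) (hA1 : A 1 = 1)
    (hAderiv : ∀ y ∈ Icc (0:ℝ) 1, HasDerivWithinAt A (A' y) (Icc 0 1) y)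
    (hx : 0 < x) (hslope : x * A' 1 < 1 - γ) (hxx' : x' ≠ x) (hm : m ∈ Ioc 0 1)
    (hmax : IsMaxOn (R A γ x) (Ioc 0 1) m) : ¬ IsMaxOn (R A γ x') (Ioc 0 1) m := by
  intro hmax'
  have hm1 : m < 1 := hm.2.lt_of_ne <| by
    rintro rfl
    exact not_isMaxOn_R_one hA1 (hAderiv 1 (right_mem_Icc.2 zero_le_one)) hslope hmax
  have hmIoo : m ∈ Ioo 0 1 := ⟨hm.1, hm1⟩
  have hA' := hAderiv m (Ioo_subset_Icc_self hmIoo)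
  have hstat := R'_eq_zero_of_isMaxOn hmIoo hA' hmax
  have hstat' := R'_eq_zero_of_isMaxOn hmIoo hA' hmax'
  have hA'm : A' m = 0 := by
    have : (x - x') * A' m = R' A A' γ x m - R' A A' γ x' m := by
      unfold R'
      ring
    rw [hstat, hstat', sub_zero] at this
    exact (mul_eq_zero.1 this).resolve_left (sub_ne_zero.2 hxx'.symm)
  have hAm : A m = γ := by
    simpa [R', hA'm, hm.1.ne', sub_eq_zero] using hstat
  have hRm : R A γ x m = γ * x - γ := by
    have hm0 := hm.1.ne'
    unfold R
    rw [hAm]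
    field_simp
    ring
  have := isMaxOn_iff.1 hmax 1 ⟨one_pos, le_rfl⟩
  rw [R_one hA1, hRm] at this
  nlinarith

lemma isMaxOn_R_of_le_max (hA1 : A 1 = 1) (hx : γ < x)
    (hle : ∀ l ∈ Ioc (0:ℝ) 1, R A γ x l ≤ max (R A γ x m) 0) :
    IsMaxOn (R A γ x) (Ioc 0 1) m := by
  have hpos : 0 < R A γ x m := by
    have h1 := hle 1 ⟨one_pos, le_rfl⟩
    rw [R_one hA1] at h1
    by_contra! h
    rw [max_eq_right h] at h1
    linarith
  exact fun l hl => (hle l hl).trans (max_eq_left hpos.le).le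

end EffectiveVirtualValue

section TwoCertificateProfit

variable {A c cinv φ f : ℝ → ℝ} {γ θb : ℝ}
  (hG : Continuous (legendre c cinv)) (hφ : ContinuousOn φ (Icc 0 θb))
  (hf : ContinuousOn f (Icc 0 θb))
include hG hφ hf

lemma continuousOn_pointProfit_mul (l : ℝ) :
    ContinuousOn (fun θ => pointProfit A c cinv γ (φ θ) l * f θ) (Icc 0 θb) :=
  ((hG.comp (continuous_R_left A γ l)).comp_continuousOn hφ).mul hf

lemma intervalIntegrable_pointProfit_mul (l : ℝ) {a b : ℝ} (ha : a ∈ Icc 0 θb)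
    (hb : b ∈ Icc 0 θb) :
    IntervalIntegrable (fun θ => pointProfit A c cinv γ (φ θ) l * f θ) volume a b :=
  ((continuousOn_pointProfit_mul hG hφ hf l).mono (uIcc_subset_Icc ha hb)).intervalIntegrable

lemma Pibin_self (l : ℝ) {t : ℝ} (ht : t ∈ Icc 0 θb) :
    Pibin A c cinv φ f γ θb l l t = ∫ θ in (0:ℝ)..θb, pointProfit A c cinv γ (φ θ) l * f θ :=
  integral_add_adjacent_intervals
    (intervalIntegrable_pointProfit_mul hG hφ hf l (left_mem_Icc.2 (ht.1.trans ht.2)) ht)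
    (intervalIntegrable_pointProfit_mul hG hφ hf l ht (right_mem_Icc.2 (ht.1.trans ht.2)))

variable (hGmono : Monotone (legendre c cinv))
  (hGlt : ∀ {y z : ℝ}, max y 0 < z → legendre c cinv y < legendre c cinv z)
  (hfpos : ∀ θ ∈ Icc (0:ℝ) θb, 0 < f θ)
include hGmono hGlt hfpos

lemma integral_pointProfit_mul_lt {l m a b s : ℝ} (hab : a < b) (ha : 0 ≤ a) (hb : b ≤ θb)
    (hs : s ∈ Icc a b) (hle : ∀ θ ∈ Icc a b, R A γ (φ θ) m ≤ R A γ (φ θ) l)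
    (hlt : max (R A γ (φ s) m) 0 < R A γ (φ s) l) :
    ∫ θ in a..b, pointProfit A c cinv γ (φ θ) m * f θ
      < ∫ θ in a..b, pointProfit A c cinv γ (φ θ) l * f θ := by
  have hsub : Icc a b ⊆ Icc 0 θb := Icc_subset_Icc ha hb
  refine integral_lt_integral_of_continuousOn_of_le_of_exists_lt hab
    ((continuousOn_pointProfit_mul hG hφ hf m).mono hsub)
    ((continuousOn_pointProfit_mul hG hφ hf l).mono hsub) (fun θ hθ => ?_)
    ⟨s, hs, mul_lt_mul_of_pos_right (hGlt hlt) (hfpos s (hsub hs))⟩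
  exact mul_le_mul_of_nonneg_right (hGmono (hle θ (Ioc_subset_Icc_self hθ)))
    (hfpos θ (hsub (Ioc_subset_Icc_self hθ))).le

lemma R_le_max_of_pooling_optimal (hθb : 0 < θb) (hφmono : StrictMonoOn φ (Icc 0 θb))
    (hAmono : MonotoneOn A (Icc 0 1)) {m : ℝ} (hm : m ∈ Ioc (0:ℝ) 1)
    (hopt : ∀ l₁ l₂ t : ℝ, 0 < l₁ → l₁ ≤ l₂ → l₂ ≤ 1 → t ∈ Icc (0:ℝ) θb →
      Pibin A c cinv φ f γ θb l₁ l₂ t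
        ≤ ∫ θ in (0:ℝ)..θb, pointProfit A c cinv γ (φ θ) m * f θ) :
    ∀ l ∈ Ioc (0:ℝ) 1, ∀ t ∈ Icc 0 θb, R A γ (φ t) l ≤ max (R A γ (φ t) m) 0 := by
  intro l hl t ht
  have hR : ∀ l', ContinuousOn (fun θ => R A γ (φ θ) l') (Icc 0 θb) :=
    fun l' => (continuous_R_left A γ l').comp_continuousOn hφ
  have hinterior : ∀ s ∈ Ioo 0 θb, R A γ (φ s) l ≤ max (R A γ (φ s) m) 0 := by
    intro s hs
    by_contra! hlt
    have hsI := Ioo_subset_Icc_self hs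
    have hgap : 0 < R A γ (φ s) l - R A γ (φ s) m := by
      linarith [le_max_left (R A γ (φ s) m) 0]
    have hsplit := integral_add_adjacent_intervals
      (intervalIntegrable_pointProfit_mul (A := A) (γ := γ) hG hφ hf m (left_mem_Icc.2 hθb.le) hsI)
      (intervalIntegrable_pointProfit_mul hG hφ hf m hsI (right_mem_Icc.2 hθb.le))
    rcases lt_trichotomy l m with hlm | rfl | hml
    · have hA := hAmono ⟨hl.1.le, hl.2⟩ ⟨hm.1.le, hm.2⟩ hlm.le
      have hgain := integral_pointProfit_mul_lt hG hφ hf hGmono hGlt hfpos hs.1 le_rfl hs.2.le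
        (right_mem_Icc.2 hs.1.le) (fun θ hθ => by
          have := R_sub_R_le (γ := γ) hA
            (hφmono.monotoneOn ⟨hθ.1, hθ.2.trans hs.2.le⟩ hsI hθ.2)
          linarith) hlt
      have := hopt l m s hl.1 hlm.le hm.2 hsI
      unfold Pibin at this
      linarith
    · exact (le_max_left _ _).not_gt hlt
    · have hA := hAmono ⟨hm.1.le, hm.2⟩ ⟨hl.1.le, hl.2⟩ hml.le
      have hgain := integral_pointProfit_mul_lt hG hφ hf hGmono hGlt hfpos hs.2 hs.1.le le_rfl
        (left_mem_Icc.2 hs.2.le) (fun θ hθ => by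
          have := R_sub_R_le (γ := γ) hA
            (hφmono.monotoneOn hsI ⟨hs.1.le.trans hθ.1, hθ.2⟩ hθ.1)
          linarith) hlt
      have := hopt m l s hm.1 hml.le hl.2 hsI
      unfold Pibin at this
      linarith
  have hcl : closure (Ioo 0 θb) = Icc 0 θb := closure_Ioo hθb.ne
  exact le_on_closure hinterior (hcl ▸ hR l) (hcl ▸ (hR m).sup continuousOn_const) (hcl ▸ ht)

end TwoCertificateProfit

theorem stmt2_general
    (θb γ : ℝ) (A A' c c' cinv φ f : ℝ → ℝ)
    (hθb : 0 < θb) (hγ1 : γ < 1) (hγθ : γ < θb)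
    (hA1 : A 1 = 1)
    (hAmono : StrictMonoOn A (Icc 0 1))
    (hAderiv : ∀ y ∈ Icc (0:ℝ) 1, HasDerivWithinAt A (A' y) (Icc 0 1) y)
    (hc'0 : c' 0 = 0)
    (hcconv : StrictConvexOn ℝ (Ici 0) c)
    (hcderiv : ∀ v ∈ Ici (0:ℝ), HasDerivWithinAt c (c' v) (Ici 0) v)
    (hcinv₁ : ∀ v, 0 ≤ v → cinv (c' v) = v)
    (hcinv₂ : ∀ y, 0 ≤ y → 0 ≤ cinv y ∧ c' (cinv y) = y)
    (hφcont : ContinuousOn φ (Icc 0 θb))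
    (hφmono : StrictMonoOn φ (Icc 0 θb))
    (hφtop : φ θb = θb)
    (hfcont : ContinuousOn f (Icc 0 θb))
    (hfpos : ∀ θ ∈ Icc (0:ℝ) θb, 0 < f θ)
    (hslope : θb * A' 1 < 1 - γ) :
    ∀ llo lhi θhat : ℝ, 0 < llo → llo ≤ lhi → lhi ≤ 1 → θhat ∈ Icc (0:ℝ) θb →
      (∀ llo' lhi' θhat' : ℝ, 0 < llo' → llo' ≤ lhi' → lhi' ≤ 1 → θhat' ∈ Icc (0:ℝ) θb →
        Pibin A c cinv φ f γ θb llo' lhi' θhat' ≤ Pibin A c cinv φ f γ θb llo lhi θhat) →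
      llo < lhi := by
  intro m lhi θhat hm hmlhi hlhi1 hθhat hopt
  refine hmlhi.lt_of_ne ?_
  rintro rfl
  have hG := legendre_continuous hcconv hcderiv hcinv₂ hc'0 hcinv₁
  have hle_max := R_le_max_of_pooling_optimal hG hφcont hfcont
    (legendre_monotone hcconv hcderiv hcinv₂ hc'0 hcinv₁)
    (legendre_lt_legendre hcconv hcderiv hcinv₂) hfpos hθb hφmono hAmono.monotoneOn ⟨hm, hlhi1⟩
    (fun l₁ l₂ t h₁ h₂ h₃ ht => Pibin_self hG hφcont hfcont m hθhat ▸ hopt l₁ l₂ t h₁ h₂ h₃ ht)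
  have hθbI : θb ∈ Icc 0 θb := right_mem_Icc.2 hθb.le
  obtain ⟨t, ht, hγt⟩ : ∃ t ∈ Ioo 0 θb, γ < φ t :=
    (Filter.Eventually.and (Ioo_mem_nhdsLT hθb) <| ((hφcont θb hθbI).mono_of_mem_nhdsWithin
      (Icc_mem_nhdsLT hθb)).eventually_const_lt (hφtop.symm ▸ hγθ)).exists
  have hφt : φ t ≠ θb :=
    (hφtop ▸ hφmono (Ioo_subset_Icc_self ht) hθbI ht.2).ne
  exact not_isMaxOn_R_of_isMaxOn hγ1 hA1 hAderiv hθb hslope hφt ⟨hm, hlhi1⟩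
    (isMaxOn_R_of_le_max hA1 hγθ fun l hl => hφtop ▸ hle_max l hl θb hθbI)
    (isMaxOn_R_of_le_max hA1 hγt fun l hl => hle_max l hl t (Ioo_subset_Icc_self ht))

/-- if `θ̄·A'(1) < 1 − γ`, every optimal pair of two certificates
is strictly separated: `λ_low* < λ_high*`. -/
theorem stmt2
    (θb γ : ℝ) (A A' c c' cinv φ f : ℝ → ℝ)
    (hθb : 0 < θb) (hγ0 : 0 < γ) (hγ1 : γ < 1) (hγθ : γ < θb)
    (hA0 : A 0 = 0) (hA1 : A 1 = 1)
    (hAmono : StrictMonoOn A (Icc 0 1))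
    (hAderiv : ∀ y ∈ Icc (0:ℝ) 1, HasDerivWithinAt A (A' y) (Icc 0 1) y)
    (hc0 : c 0 = 0) (hc'0 : c' 0 = 0)
    (hcmono : StrictMonoOn c (Ici 0))
    (hcconv : StrictConvexOn ℝ (Ici 0) c)
    (hcderiv : ∀ v ∈ Ici (0:ℝ), HasDerivWithinAt c (c' v) (Ici 0) v)
    (hc'top : Filter.Tendsto c' Filter.atTop Filter.atTop)
    (hcinv₁ : ∀ v, 0 ≤ v → cinv (c' v) = v)
    (hcinv₂ : ∀ y, 0 ≤ y → 0 ≤ cinv y ∧ c' (cinv y) = y)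
    (hφcont : ContinuousOn φ (Icc 0 θb))
    (hφmono : StrictMonoOn φ (Icc 0 θb))
    (hφtop : φ θb = θb) (hφ0 : φ 0 < 0)
    (hfcont : ContinuousOn f (Icc 0 θb))
    (hfpos : ∀ θ ∈ Icc (0:ℝ) θb, 0 < f θ)
    (hslope : θb * A' 1 < 1 - γ) :
    ∀ llo lhi θhat : ℝ, 0 < llo → llo ≤ lhi → lhi ≤ 1 → θhat ∈ Icc (0:ℝ) θb →
      (∀ llo' lhi' θhat' : ℝ, 0 < llo' → llo' ≤ lhi' → lhi' ≤ 1 → θhat' ∈ Icc (0:ℝ) θb →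
        Pibin A c cinv φ f γ θb llo' lhi' θhat' ≤ Pibin A c cinv φ f γ θb llo lhi θhat) →
      llo < lhi :=
  stmt2_general θb γ A A' c c' cinv φ f hθb hγ1 hγθ hA1 hAmono hAderiv hc'0 hcconv hcderiv hcinv₁
    hcinv₂ hφcont hφmono hφtop hfcont hfpos hslope
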